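/- arXiv:0706.0290 — 9 statements merged into one kernel-verified Lean document; each statement's English description precedes it below -/
import Mathlib

section
/- The set of Pythagorean triples is exactly the set of integer triples in the image of T: ℤ³ → ℚ³, T(a,b,c) = (c(a²−b²)/2, cab, c(a²+b²)/2). -/
/-!
Since `y ^ 2 = (z + x) * (z - x)`, everything reduces to describing the factorizations of a
square: if `y ^ 2 = u * v` then `u = c * a ^ 2`, `y = c * a * b`, `v = c * b ^ 2`. Writing
`u = d * a`, `y = d * b` with `d = gcd u y`, the relation becomes `d * b ^ 2 = a * v`, so `a`,
being coprime to `b`, divides `d`; the cofactor is `c`. Then `x` and `z` are half the difference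
and half the sum of `c * b ^ 2` and `c * a ^ 2`.
-/

theorem exists_eq_mul_sq_of_sq_eq_mul {α : Type*} [CommMonoidWithZero α] [GCDMonoid α]
    {u v y : α} (h : y ^ 2 = u * v) :
    ∃ a b c : α, u = c * a ^ 2 ∧ y = c * a * b ∧ v = c * b ^ 2 := by
  rcases eq_or_ne u 0 with rfl | hu
  · have hy : y = 0 := pow_eq_zero_iff two_ne_zero |>.mp (by rw [h, zero_mul])
    exact ⟨0, 1, v, by simp, by simp [hy], by simp⟩
  obtain ⟨a, b, hua, hyb, hab⟩ := extract_gcd u y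
  set d := gcd u y
  have hd : d ≠ 0 := fun hd => hu (by rw [hua, hd, zero_mul])
  have ha : a ≠ 0 := fun ha => hu (by rw [hua, ha, mul_zero])
  have hdb : d * b ^ 2 = a * v :=
    mul_left_cancel₀ hd (by rw [← mul_assoc, ← mul_assoc, ← hua, ← h, hyb, mul_pow, sq d])
  obtain ⟨c, hc⟩ : a ∣ d :=
    (gcd_isUnit_iff_isRelPrime.mp hab).pow_right.dvd_of_dvd_mul_right ⟨v, hdb⟩
  refine ⟨a, b, c, by rw [hua, hc, sq]; ac_rfl, by rw [hyb, hc, mul_comm a c],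
    mul_left_cancel₀ ha ?_⟩
  rw [← hdb, hc, mul_assoc]

theorem pythagorean_iff_in_image_T (x y z : ℤ) :
    x ^ 2 + y ^ 2 = z ^ 2 ↔
      ∃ a b c : ℤ,
        (x : ℚ) = (c : ℚ) * ((a : ℚ) ^ 2 - (b : ℚ) ^ 2) / 2 ∧
        (y : ℚ) = (c : ℚ) * (a : ℚ) * (b : ℚ) ∧
        (z : ℚ) = (c : ℚ) * ((a : ℚ) ^ 2 + (b : ℚ) ^ 2) / 2 := by
  constructor
  · intro h
    obtain ⟨a, b, c, hu, hy, hv⟩ :=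
      exists_eq_mul_sq_of_sq_eq_mul (show y ^ 2 = (z + x) * (z - x) by linear_combination h)
    have hu' : (z : ℚ) + x = c * a ^ 2 := by exact_mod_cast hu
    have hv' : (z : ℚ) - x = c * b ^ 2 := by exact_mod_cast hv
    refine ⟨a, b, c, by linear_combination (hu' - hv') / 2, by exact_mod_cast hy,
      by linear_combination (hu' + hv') / 2⟩
  · rintro ⟨a, b, c, hx, hy, hz⟩
    have hq : (x : ℚ) ^ 2 + (y : ℚ) ^ 2 = (z : ℚ) ^ 2 := by
      rw [hx, hy, hz]; ring
    exact_mod_cast hq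
end

section
/- The map (x,y,z,w) ↦ (y+zw, z−yw, 2x−xw) from ℤ⁴ to ℤ³ has image exactly the set of triples (a,b,c) ∈ ℤ³ satisfying c ≡ 0 (mod 2) or a ≡ b (mod 2). -/
theorem parity_parametrization (a b c : ℤ) :
    (∃ x y z w : ℤ, a = y + z * w ∧ b = z - y * w ∧ c = 2 * x - x * w) ↔
      (c % 2 = 0 ∨ a % 2 = b % 2) := by
  constructor
  · rintro ⟨x, y, z, w, rfl, rfl, rfl⟩
    rcases Int.even_or_odd w with hw | hw
    · left
      obtain ⟨k, rfl⟩ := hw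
      have h : 2 * x - x * (k + k) = 2 * (x - x * k) := by ring
      rw [h]; omega
    · right
      obtain ⟨k, rfl⟩ := hw
      have h1 : y + z * (2 * k + 1) = y + z + 2 * (z * k) := by ring
      have h2 : z - y * (2 * k + 1) = z - y - 2 * (y * k) := by ring
      rw [h1, h2]
      generalize z * k = m
      generalize y * k = n
      omega
  · rintro (h | h)
    · exact ⟨c / 2, a, b, 0, by ring, by ring, by omega⟩
    · exact ⟨c, (a - b) / 2, (a + b) / 2, 1, by omega, by omega, by ring⟩
end

section
/- The image of ℤ⁴ under the map F(x,y,z,w) = ((2x−xw)((y+zw)²−(z−yw)²)/2, (2x−xw)(y+zw)(z−yw), (2x−xw)((y+zw)²+(z−yw)²)/2) is exactly the set of Pythagorean triples, i.e., {(a,b,c) ∈ ℤ³ : a² + b² = c²}. -/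
theorem image_F_eq_pythagorean (a b c : ℤ) :
    (∃ x y z w : ℤ,
      (a : ℚ) = ((2 * x - x * w : ℤ) : ℚ) * (((y + z * w : ℤ) : ℚ) ^ 2 - ((z - y * w : ℤ) : ℚ) ^ 2) / 2 ∧
      (b : ℚ) = ((2 * x - x * w : ℤ) : ℚ) * ((y + z * w : ℤ) : ℚ) * ((z - y * w : ℤ) : ℚ) ∧
      (c : ℚ) = ((2 * x - x * w : ℤ) : ℚ) * (((y + z * w : ℤ) : ℚ) ^ 2 + ((z - y * w : ℤ) : ℚ) ^ 2) / 2) ↔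
    a ^ 2 + b ^ 2 = c ^ 2 := by
  constructor
  · rintro ⟨x, y, z, w, ha, hb, hc⟩
    have : (a : ℚ) ^ 2 + (b : ℚ) ^ 2 = (c : ℚ) ^ 2 := by
      rw [ha, hb, hc]; push_cast; ring
    exact_mod_cast this
  · intro h
    have hpt : PythagoreanTriple a b c := by
      unfold PythagoreanTriple; nlinarith [h]
    obtain ⟨k, m, n, habs, hcs⟩ := PythagoreanTriple.classification.mp hpt
    rcases habs with ⟨rfl, rfl⟩ | ⟨rfl, rfl⟩ <;> rcases hcs with rfl | rfl
    · exact ⟨k, m, n, 0, by push_cast; ring, by push_cast; ring, by push_cast; ring⟩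
    · exact ⟨-k, n, -m, 0, by push_cast; ring, by push_cast; ring, by push_cast; ring⟩
    · exact ⟨k, n, m, 1, by push_cast; ring, by push_cast; ring, by push_cast; ring⟩
    · exact ⟨-k, m, -n, 1, by push_cast; ring, by push_cast; ring, by push_cast; ring⟩
end

section
/- There do not exist polynomials f, g, h ∈ ℤ[x₁,…,xₙ] (for any n) such that the image of ℤⁿ under (f,g,h) equals the set of all Pythagorean triples. -/
open MvPolynomial

/-- In a UFD, if `A * B = f ^ 2` with everything nonzero, then `A` and `B` are a common
factor times squares. -/
theorem sq_decomp {R : Type*} [CommRing R] [IsDomain R] [UniqueFactorizationMonoid R]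
    {A B f : R} (hA : A ≠ 0) (hB : B ≠ 0) (hf : f ≠ 0) (hAB : A * B = f ^ 2) :
    ∃ D u w : R, A = D * u ^ 2 ∧ B = D * w ^ 2 := by
  classical
  letI : GCDMonoid R := UniqueFactorizationMonoid.toGCDMonoid R
  haveI : Nonempty (GCDMonoid R) := ⟨inferInstance⟩
  obtain ⟨A₁, hA1⟩ := gcd_dvd_left A B
  obtain ⟨B₁, hB1⟩ := gcd_dvd_right A B
  set D := gcd A B with hD
  have hD0 : D ≠ 0 := fun h0 => hA ((gcd_eq_zero_iff A B).mp h0).1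
  have hA₁0 : A₁ ≠ 0 := by rintro rfl; rw [mul_zero] at hA1; exact hA hA1
  have hB₁0 : B₁ ≠ 0 := by rintro rfl; rw [mul_zero] at hB1; exact hB hB1
  have hcop : IsUnit (gcd A₁ B₁) := by
    have hassoc : Associated (gcd (D * A₁) (D * B₁)) (D * gcd A₁ B₁) := gcd_mul_left' D A₁ B₁
    rw [← hA1, ← hB1, ← hD] at hassoc
    obtain ⟨e, he⟩ := hassoc
    have : (e : R) = gcd A₁ B₁ := mul_left_cancel₀ hD0 he
    exact this ▸ e.isUnit
  have hDf : D ∣ f := by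
    have h2 : D ^ 2 ∣ f ^ 2 := ⟨A₁ * B₁, by rw [← hAB, hA1, hB1]; ring⟩
    exact (IsIntegrallyClosed.pow_dvd_pow_iff two_ne_zero).mp h2
  obtain ⟨f₁, hf1⟩ := hDf
  have hprod : A₁ * B₁ = f₁ ^ 2 := by
    apply mul_left_cancel₀ (pow_ne_zero 2 hD0)
    calc D ^ 2 * (A₁ * B₁) = (D * A₁) * (D * B₁) := by ring
    _ = f ^ 2 := by rw [← hA1, ← hB1, hAB]
    _ = D ^ 2 * f₁ ^ 2 := by rw [hf1]; ring
  obtain ⟨u, ε, hε⟩ := exists_associated_pow_of_mul_eq_pow hcop hprod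
  have hcop' : IsUnit (gcd B₁ A₁) := (gcd_comm' A₁ B₁).isUnit hcop
  obtain ⟨w0, δ, hδ⟩ := exists_associated_pow_of_mul_eq_pow hcop'
    (by rw [mul_comm]; exact hprod)
  -- A₁ = u^2 * ε, B₁ = w0^2 * δ
  have hu0 : u ≠ 0 := by rintro rfl; apply hA₁0; rw [← hε]; ring
  have hw0 : w0 ≠ 0 := by rintro rfl; apply hB₁0; rw [← hδ]; ring
  have hεδ : (u * w0) ^ 2 * ((ε : R) * (δ : R)) = f₁ ^ 2 := by
    rw [← hprod, ← hε, ← hδ]; ring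
  obtain ⟨t, ht⟩ : u * w0 ∣ f₁ :=
    (IsIntegrallyClosed.pow_dvd_pow_iff two_ne_zero).mp ⟨(ε : R) * δ, hεδ.symm⟩
  have ht2 : (ε : R) * (δ : R) = t ^ 2 := by
    apply mul_left_cancel₀ (pow_ne_zero 2 (mul_ne_zero hu0 hw0))
    rw [hεδ, ht]; ring
  set ei : R := ((ε⁻¹ : Rˣ) : R) with hei
  have hinv : (ε : R) * ei = 1 := by rw [hei]; exact_mod_cast ε.mul_inv
  refine ⟨D * (ε : R), u, w0 * t * ei, ?_, ?_⟩
  · rw [hA1, ← hε]; ring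
  · rw [hB1, ← hδ]
    have key : ((ε : R)) ^ 2 * (D * (w0 ^ 2 * (δ : R))) =
        ((ε : R)) ^ 2 * (D * (ε : R) * (w0 * t * ei) ^ 2) := by
      linear_combination (-((ε : R) ^ 2 * D * w0 ^ 2 * (δ : R) * ((ε : R) * ei + 1))) * hinv +
        (D * (ε : R) ^ 3 * w0 ^ 2 * ei ^ 2) * ht2
    exact mul_left_cancel₀ (pow_ne_zero 2 ε.ne_zero) key

theorem no_polynomial_parametrization :
    ¬ ∃ (n : ℕ) (f g h : MvPolynomial (Fin n) ℤ),
      ∀ x y z : ℤ,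
        ((∃ v : Fin n → ℤ,
            MvPolynomial.eval v f = x ∧ MvPolynomial.eval v g = y ∧ MvPolynomial.eval v h = z) ↔
          x ^ 2 + y ^ 2 = z ^ 2) := by
  rintro ⟨n, f, g, h, H⟩
  -- the defining equation holds as a polynomial identity
  have hid : f ^ 2 + g ^ 2 = h ^ 2 := by
    apply MvPolynomial.funext
    intro v
    have := (H (eval v f) (eval v g) (eval v h)).mp ⟨v, rfl, rfl, rfl⟩
    simpa using this
  obtain ⟨a, hfa, hga, hha⟩ := (H 3 4 5).mpr (by norm_num)
  obtain ⟨b, hfb, hgb, hhb⟩ := (H 4 3 5).mpr (by norm_num)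
  have hAB : (h - g) * (h + g) = f ^ 2 := by linear_combination -hid
  have hA0 : h - g ≠ 0 := fun h0 => by
    have := congrArg (eval a) h0
    rw [map_sub, hha, hga] at this; simp at this
  have hB0 : h + g ≠ 0 := fun h0 => by
    have := congrArg (eval a) h0
    rw [map_add, hha, hga] at this; simp at this
  have hf0 : f ≠ 0 := fun h0 => by
    have := congrArg (eval a) h0
    rw [hfa] at this; simp at this
  obtain ⟨D, u, w, hDu, hDw⟩ := sq_decomp hA0 hB0 hf0 hAB
  -- evaluations
  have e1 : eval a D * (eval a u) ^ 2 = 1 := by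
    have := congrArg (eval a) hDu
    rw [map_sub, hha, hga, map_mul, map_pow] at this; linarith
  have e2 : eval b D * (eval b u) ^ 2 = 2 := by
    have := congrArg (eval b) hDu
    rw [map_sub, hhb, hgb, map_mul, map_pow] at this; linarith
  have e3 : eval b D * (eval b w) ^ 2 = 8 := by
    have := congrArg (eval b) hDw
    rw [map_add, hhb, hgb, map_mul, map_pow] at this; linarith
  -- integer consequences
  have hDa : IsUnit (eval a D) := isUnit_of_dvd_one ⟨(eval a u) ^ 2, e1.symm⟩
  obtain ⟨p, hp⟩ : ∃ t : ℤ, eval b u = t := ⟨_, rfl⟩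
  obtain ⟨q, hq⟩ : ∃ t : ℤ, eval b w = t := ⟨_, rfl⟩
  rw [hp] at e2
  rw [hq] at e3
  have hub : p ^ 2 = 1 := by
    have hle : p ^ 2 ∣ 2 := ⟨eval b D, by linarith [e2]⟩
    have h2 : p ^ 2 ≤ 2 := Int.le_of_dvd (by norm_num) hle
    have hne : p ≠ 0 := by rintro h0; rw [h0] at e2; simp at e2
    have hl : -1 ≤ p := by nlinarith [sq_nonneg (p + 1)]
    have hr : p ≤ 1 := by nlinarith [sq_nonneg (p - 1)]
    interval_cases p <;> simp_all
  have hDb : eval b D = 2 := by rw [hub] at e2; linarith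
  have hwb : q ^ 2 = 4 := by rw [hDb] at e3; linarith
  -- reduction mod 2
  have h2h : D * (u ^ 2 + w ^ 2) = 2 * h := by linear_combination -hDu - hDw
  let φ : MvPolynomial (Fin n) ℤ →+* MvPolynomial (Fin n) (ZMod 2) :=
    MvPolynomial.map (Int.castRingHom (ZMod 2))
  have key : φ D * (φ u + φ w) ^ 2 = 0 := by
    have h0 := congrArg φ h2h
    rw [map_mul, map_add, map_pow, map_pow, map_mul, map_ofNat] at h0
    rw [add_pow_char (φ u) (φ w) 2, h0,
      CharTwo.two_eq_zero (R := MvPolynomial (Fin n) (ZMod 2)), zero_mul]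
  -- evaluation commutes with reduction
  have comm : ∀ (pl : MvPolynomial (Fin n) ℤ) (v : Fin n → ℤ),
      eval (fun i => ((v i : ZMod 2))) (φ pl) = ((eval v pl : ℤ) : ZMod 2) := by
    intro pl v
    rw [show φ pl = MvPolynomial.map (Int.castRingHom (ZMod 2)) pl from rfl, eval_map]
    rw [show ((eval v pl : ℤ) : ZMod 2) = (Int.castRingHom (ZMod 2)) (eval v pl) from rfl]
    rw [show eval v pl = eval₂ (RingHom.id ℤ) v pl from (eval₂_id pl).symm]
    rw [eval₂_comp_left (Int.castRingHom (ZMod 2)) (RingHom.id ℤ) v pl]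
    rfl
  rcases mul_eq_zero.mp key with hD2 | hs
  · -- D reduces to 0 mod 2, but eval a D = ±1
    have h0 := comm D a
    rw [hD2, map_zero] at h0
    have h1 : ((eval a D : ℤ) : ZMod 2) = 1 := by
      rcases Int.isUnit_iff.mp hDa with h1 | h1 <;> rw [h1] <;>
        simp only [Int.cast_one, Int.cast_neg] <;> decide
    rw [← h0] at h1
    exact absurd h1 (by decide)
  · have huw : φ u = φ w := by
      have hz : φ u + φ w = 0 := pow_eq_zero_iff two_ne_zero |>.mp hs
      have := eq_neg_of_add_eq_zero_left hz
      rwa [CharTwo.neg_eq] at this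
    have hcast := congrArg (eval (fun i => ((b i : ZMod 2)))) huw
    rw [comm u b, comm w b, hp, hq] at hcast
    have h1 : ((p : ℤ) : ZMod 2) ^ 2 = 1 := by
      rw [← Int.cast_pow, hub]; exact Int.cast_one
    have h2 : ((q : ℤ) : ZMod 2) ^ 2 = 0 := by
      rw [← Int.cast_pow, hwb]; push_cast; decide
    rw [hcast, h2] at h1
    exact absurd h1 (by decide)
end

section
/- If f, g, h ∈ ℤ[x₁,…,xₙ] satisfy f² + g² = h² and the image of (f,g,h) on ℤⁿ contains a triple with odd first coordinate, then writing d = gcd(g,h), φ = f/d, ψ = g/d, θ = h/d, the polynomials θ+ψ and θ−ψ are coprime in ℤ[x₁,…,xₙ]. -/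
/-!
Cancelling `d² ≠ 0` gives `φ² + ψ² = θ²`, so `(θ + ψ)(θ - ψ) = φ²`, and `φ` takes an odd value
wherever `f = dφ` does; hence `θ + ψ` takes an odd value and is coprime to the prime `2`. A common
divisor of `θ + ψ` and `θ - ψ` divides `2θ` and `2ψ`, hence `θ` and `ψ`, which are coprime because
`d` is a greatest common divisor of `g = dψ` and `h = dθ`.
-/

theorem isRelPrime_of_forall_dvd_mul {R : Type*} [CommMonoidWithZero R] [IsCancelMulZero R] {d a b : R}
    (hd : d ≠ 0) (hgcd : ∀ e, e ∣ d * a → e ∣ d * b → e ∣ d) : IsRelPrime a b := by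
  intro e hea heb
  have hde : d * e ∣ d * 1 := by
    simpa using hgcd _ (mul_dvd_mul_left d hea) (mul_dvd_mul_left d heb)
  exact isUnit_of_dvd_one ((mul_dvd_mul_iff_left hd).1 hde)

theorem isRelPrime_add_sub {R : Type*} [CommRing R] [DecompositionMonoid R] {a b : R}
    (hab : IsRelPrime a b) (h2 : IsRelPrime 2 (a + b)) : IsRelPrime (a + b) (a - b) := by
  intro e hsum hdiff
  have he2 : IsRelPrime e 2 := (h2.of_dvd_right hsum).symm
  have h2a : e ∣ 2 * a := by simpa [two_mul] using dvd_add hsum hdiff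
  have h2b : e ∣ 2 * b := by simpa [two_mul] using dvd_sub hsum hdiff
  exact hab (he2.dvd_of_dvd_mul_left h2a) (he2.dvd_of_dvd_mul_left h2b)

theorem MvPolynomial.isRelPrime_two_of_odd_eval {σ : Type*} {p : MvPolynomial σ ℤ} (v : σ → ℤ)
    (hp : Odd (eval v p)) : IsRelPrime 2 p := by
  have h2 : Irreducible (2 : MvPolynomial σ ℤ) := by
    simpa using ((prime_C_iff σ).2 Int.prime_two).irreducible
  refine h2.isRelPrime_iff_not_dvd.2 fun hdvd => Int.not_even_iff_odd.2 hp ?_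
  simpa [even_iff_two_dvd] using map_dvd (eval v) hdvd

theorem quotients_coprime_general (n : ℕ) (f g h d φ ψ θ : MvPolynomial (Fin n) ℤ)
    (hfgh : f ^ 2 + g ^ 2 = h ^ 2)
    (hodd : ∃ v : Fin n → ℤ, Odd (MvPolynomial.eval v f))
    (hgcd : ∀ e : MvPolynomial (Fin n) ℤ, e ∣ g → e ∣ h → e ∣ d)
    (hφ : f = d * φ) (hψ : g = d * ψ) (hθ : h = d * θ) :
    ∀ e : MvPolynomial (Fin n) ℤ, e ∣ (θ + ψ) → e ∣ (θ - ψ) → IsUnit e := by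
  obtain ⟨v, hv⟩ := hodd
  subst hφ hψ hθ
  rw [map_mul] at hv
  have hd : d ≠ 0 := by rintro rfl; simp at hv
  have hpyth : (θ + ψ) * (θ - ψ) = φ ^ 2 := by
    apply mul_left_cancel₀ (pow_ne_zero 2 hd)
    linear_combination -hfgh
  have hsum : Odd (MvPolynomial.eval v (θ + ψ)) := by
    have hsq : Odd (MvPolynomial.eval v ((θ + ψ) * (θ - ψ))) := by
      rw [hpyth, map_pow]
      exact (Int.odd_mul.1 hv).2.pow
    exact (Int.odd_mul.1 (by rwa [map_mul] at hsq)).1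
  exact isRelPrime_add_sub (isRelPrime_of_forall_dvd_mul hd hgcd).symm
    (MvPolynomial.isRelPrime_two_of_odd_eval v hsum)

theorem quotients_coprime (n : ℕ) (f g h d φ ψ θ : MvPolynomial (Fin n) ℤ)
    (hfgh : f ^ 2 + g ^ 2 = h ^ 2)
    (hodd : ∃ v : Fin n → ℤ, Odd (MvPolynomial.eval v f))
    (hdg : d ∣ g) (hdh : d ∣ h)
    (hgcd : ∀ e : MvPolynomial (Fin n) ℤ, e ∣ g → e ∣ h → e ∣ d)
    (hφ : f = d * φ) (hψ : g = d * ψ) (hθ : h = d * θ) :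
    ∀ e : MvPolynomial (Fin n) ℤ, e ∣ (θ + ψ) → e ∣ (θ - ψ) → IsUnit e :=
  quotients_coprime_general n f g h d φ ψ θ hfgh hodd hgcd hφ hψ hθ
end

section
/- The binomial coefficient polynomial C(x,k) = x(x−1)⋯(x−k+1)/k! is irreducible in the ring Int(ℤ) of integer-valued polynomials, for every k ≥ 1. -/
/-!
If `f * g = C(x,k)` in Int(ℤ) with `deg f = d` and `deg g = e`, then `d! · lc f` is the `d`-th
forward difference of `f` at `0`, an integer combination of `f(0), …, f(d)`; likewise `e! · lc g`.
Since `lc f · lc g = 1/k!`, we get `(k choose d) · (d! lc f) · (e! lc g) = 1`, which forces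
`k choose d = 1`, so one factor is constant. A constant factor is an integer dividing the value
`C(k,k) = 1`, hence it is `±1`.
-/

open Polynomial

/-- The ring of integer-valued polynomials Int(ℤ) ⊆ ℚ[x]. -/
noncomputable def IntValued : Subring (Polynomial ℚ) where
  carrier := {f | ∀ n : ℤ, ∃ m : ℤ, f.eval (n : ℚ) = (m : ℚ)}
  zero_mem' := fun n => ⟨0, by simp⟩
  one_mem' := fun n => ⟨1, by simp⟩
  add_mem' := by
    intro f g hf hg n
    obtain ⟨a, ha⟩ := hf n
    obtain ⟨b, hb⟩ := hg n
    exact ⟨a + b, by push_cast; rw [eval_add, ha, hb]⟩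
  mul_mem' := by
    intro f g hf hg n
    obtain ⟨a, ha⟩ := hf n
    obtain ⟨b, hb⟩ := hg n
    exact ⟨a * b, by push_cast; rw [eval_mul, ha, hb]⟩
  neg_mem' := by
    intro f hf n
    obtain ⟨a, ha⟩ := hf n
    exact ⟨-a, by push_cast; rw [eval_neg, ha]⟩

/-- The binomial coefficient polynomial C(x,k) = x(x−1)⋯(x−k+1)/k!. -/
noncomputable def binomPoly (k : ℕ) : Polynomial ℚ :=
  C ((k.factorial : ℚ))⁻¹ * ∏ i ∈ Finset.range k, (X - C (i : ℚ))

open scoped Nat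

theorem Polynomial.leadingCoeff_mul_factorial_mem {R : Type*} [CommRing R] {A : AddSubgroup R}
    {P : R[X]} (hP : ∀ n : ℕ, P.eval (n : R) ∈ A) : P.leadingCoeff * P.natDegree ! ∈ A := by
  have h := congrFun P.fwdDiff_iter_degree_eq_factorial 0
  rw [fwdDiff_iter_eq_sum_shift] at h
  simp only [Pi.smul_apply, Pi.natCast_apply, smul_eq_mul, zero_add, nsmul_one] at h
  rw [← h]
  exact A.sum_mem fun i _ => A.zsmul_mem (hP i) _

namespace IntValued

theorem exists_leadingCoeff_mul_factorial_eq_intCast (f : IntValued) :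
    ∃ m : ℤ, (f : ℚ[X]).leadingCoeff * (f : ℚ[X]).natDegree ! = m := by
  obtain ⟨m, hm⟩ := leadingCoeff_mul_factorial_mem (A := (Int.castAddHom ℚ).range) fun n =>
    let ⟨m, hm⟩ := f.2 n
    ⟨m, hm.symm⟩
  exact ⟨m, hm.symm⟩

theorem isUnit_of_natDegree_eq_zero {f g : IntValued} {n : ℤ} (hf : (f : ℚ[X]).natDegree = 0)
    (h : ((f : ℚ[X]) * g).eval (n : ℚ) = 1) : IsUnit f := by
  obtain ⟨a, ha⟩ := f.2 n
  obtain ⟨b, hb⟩ := g.2 n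
  have hab : a * b = 1 := by
    rw [eval_mul, ha, hb] at h
    exact_mod_cast h
  obtain ⟨c, hc⟩ := natDegree_eq_zero.mp hf
  rw [← hc, eval_C] at ha
  have hfa : f = (a : IntValued) := Subtype.ext <| by simp [← hc, ha]
  rw [hfa]
  exact (IsUnit.of_mul_eq_one b hab).map (Int.castRingHom IntValued)

end IntValued

theorem prod_range_X_sub_C_eq_descPochhammer (R : Type*) [CommRing R] (k : ℕ) :
    ∏ i ∈ Finset.range k, (X - C (i : R)) = descPochhammer R k := by
  induction k with
  | zero => simp
  | succ k ih => rw [Finset.prod_range_succ, ih, descPochhammer_succ_right, map_natCast]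

theorem binomPoly_eq_C_mul_descPochhammer (k : ℕ) :
    binomPoly k = C ((k ! : ℚ))⁻¹ * descPochhammer ℚ k := by
  rw [binomPoly, prod_range_X_sub_C_eq_descPochhammer]

theorem natDegree_binomPoly (k : ℕ) : (binomPoly k).natDegree = k := by
  rw [binomPoly_eq_C_mul_descPochhammer, natDegree_C_mul (by positivity), descPochhammer_natDegree]

theorem leadingCoeff_binomPoly (k : ℕ) : (binomPoly k).leadingCoeff = ((k ! : ℚ))⁻¹ := by
  rw [binomPoly_eq_C_mul_descPochhammer, leadingCoeff_mul, leadingCoeff_C,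
    (monic_descPochhammer ℚ k).leadingCoeff, mul_one]

theorem binomPoly_ne_zero (k : ℕ) : binomPoly k ≠ 0 := by
  rw [← leadingCoeff_ne_zero, leadingCoeff_binomPoly]
  positivity

theorem eval_self_binomPoly (k : ℕ) : (binomPoly k).eval (k : ℚ) = 1 := by
  rw [binomPoly_eq_C_mul_descPochhammer, eval_mul, eval_C, descPochhammer_eval_eq_descFactorial,
    Nat.descFactorial_self, inv_mul_cancel₀ (by positivity)]

theorem natDegree_add_natDegree_of_mul_eq_binomPoly {k : ℕ} {f g : ℚ[X]}
    (h : f * g = binomPoly k) : f.natDegree + g.natDegree = k := by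
  have hfg0 : f * g ≠ 0 := h ▸ binomPoly_ne_zero k
  rw [← natDegree_mul (left_ne_zero_of_mul hfg0) (right_ne_zero_of_mul hfg0), h,
    natDegree_binomPoly]

theorem choose_natDegree_eq_one_of_mul_eq_binomPoly {k : ℕ} {f g : IntValued}
    (h : (f : ℚ[X]) * g = binomPoly k) : k.choose (f : ℚ[X]).natDegree = 1 := by
  obtain ⟨a, ha⟩ := IntValued.exists_leadingCoeff_mul_factorial_eq_intCast f
  obtain ⟨b, hb⟩ := IntValued.exists_leadingCoeff_mul_factorial_eq_intCast g
  have hdeg := natDegree_add_natDegree_of_mul_eq_binomPoly h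
  have hlc : (f : ℚ[X]).leadingCoeff * (g : ℚ[X]).leadingCoeff * k ! = 1 := by
    rw [← leadingCoeff_mul, h, leadingCoeff_binomPoly, inv_mul_cancel₀ (by positivity)]
  have hint : ((k.choose (f : ℚ[X]).natDegree * (a * b) : ℤ) : ℚ) = 1 := by
    rw [← hlc, ← hdeg, ← Nat.add_choose_mul_factorial_mul_factorial, Nat.choose_symm_add]
    push_cast
    rw [← ha, ← hb]
    ring
  have : ((k.choose (f : ℚ[X]).natDegree : ℕ) : ℤ) = 1 :=
    Int.eq_one_of_mul_eq_one_right (Int.natCast_nonneg _) (by exact_mod_cast hint)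
  exact_mod_cast this

theorem binomPoly_irreducible (k : ℕ) (hk : 1 ≤ k) (hmem : binomPoly k ∈ IntValued) :
    Irreducible (⟨binomPoly k, hmem⟩ : IntValued) := by
  refine ⟨fun hu => ?_, fun f g h => ?_⟩
  · have : (binomPoly k).natDegree = 0 := natDegree_eq_zero_of_isUnit (hu.map IntValued.subtype)
    rw [natDegree_binomPoly] at this
    omega
  have hfg : (f : ℚ[X]) * g = binomPoly k := by rw [← Subring.coe_mul, ← h]
  have hval : ((f : ℚ[X]) * g).eval (k : ℚ) = 1 := by rw [hfg, eval_self_binomPoly]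
  rcases Nat.choose_eq_one_iff.mp (choose_natDegree_eq_one_of_mul_eq_binomPoly hfg) with hf | hf
  · exact Or.inl (IntValued.isUnit_of_natDegree_eq_zero hf hval)
  · have hg : (g : ℚ[X]).natDegree = 0 := by
      have := natDegree_add_natDegree_of_mul_eq_binomPoly hfg
      omega
    exact Or.inr (IntValued.isUnit_of_natDegree_eq_zero hg (by rwa [mul_comm]))
end

section
/- The ring Int(ℤ) of integer-valued polynomials is not a unique factorization domain. -/
open Polynomial

/-! `2` is irreducible in Int(ℤ): a factorization of the nonzero constant `2` in `ℚ[X]` has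
constant factors, and a constant integer-valued polynomial is an integer, so the factorization
comes from one in `ℤ`. But `2` is not prime: it divides `X * (X - 1) = 2 * C(X, 2)`, while
evaluating at `1` and at `0` shows that it divides neither `X` nor `X - 1`. In a UFD every
irreducible element is prime. -/

namespace IntValued

noncomputable def evalInt (n : ℤ) : IntValued →+* ℤ :=
  have spec (f : IntValued) : (((f.2 n).choose : ℤ) : ℚ) = (f : ℚ[X]).eval (n : ℚ) :=
    (f.2 n).choose_spec.symm
  { toFun := fun f => (f.2 n).choose
    map_one' := Int.cast_injective (α := ℚ) (by
      rw [spec, Int.cast_one, Subring.coe_one, eval_one])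
    map_mul' := fun f g => Int.cast_injective (α := ℚ) (by
      rw [Int.cast_mul, spec, spec, spec, Subring.coe_mul, eval_mul])
    map_zero' := Int.cast_injective (α := ℚ) (by
      rw [spec, Int.cast_zero, Subring.coe_zero, eval_zero])
    map_add' := fun f g => Int.cast_injective (α := ℚ) (by
      rw [Int.cast_add, spec, spec, spec, Subring.coe_add, eval_add]) }

theorem cast_evalInt (n : ℤ) (f : IntValued) :
    ((evalInt n f : ℤ) : ℚ) = (f : ℚ[X]).eval (n : ℚ) :=
  ((f.2 n).choose_spec).symm

theorem eq_intCast_of_isUnit_coe {a : IntValued} (ha : IsUnit (a : ℚ[X])) :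
    a = (evalInt 0 a : IntValued) := by
  apply Subtype.ext
  rw [Subring.coe_intCast, ← C_eq_intCast, cast_evalInt, Int.cast_zero,
    ← coeff_zero_eq_eval_zero]
  exact eq_C_of_natDegree_eq_zero (natDegree_eq_zero_of_isUnit ha)

theorem irreducible_intCast {p : ℤ} (hp : Irreducible p) : Irreducible (p : IntValued) := by
  refine ⟨fun hu => hp.not_isUnit (by simpa using hu.map (evalInt 0)), fun a b hab => ?_⟩
  have hunit : IsUnit ((a : ℚ[X]) * b) := by
    rw [← Subring.coe_mul, ← hab, Subring.coe_intCast, ← C_eq_intCast]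
    exact isUnit_C.mpr (Int.cast_ne_zero.mpr hp.ne_zero).isUnit
  rw [eq_intCast_of_isUnit_coe (isUnit_of_mul_isUnit_left hunit),
    eq_intCast_of_isUnit_coe (isUnit_of_mul_isUnit_right hunit)]
  have hmul : p = evalInt 0 a * evalInt 0 b := by simpa using congrArg (evalInt 0) hab
  exact (hp.isUnit_or_isUnit hmul).imp
    (IsUnit.map (Int.castRingHom _)) (IsUnit.map (Int.castRingHom _))

noncomputable def X : IntValued := ⟨Polynomial.X, fun n => ⟨n, eval_X⟩⟩

theorem evalInt_X (n : ℤ) : evalInt n X = n :=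
  Int.cast_injective (α := ℚ) (by rw [cast_evalInt]; exact eval_X)

noncomputable def choose2 : IntValued :=
  ⟨C (1 / 2) * (Polynomial.X * (Polynomial.X - 1)), fun n => by
    obtain ⟨k, hk⟩ := Int.even_mul_succ_self (n - 1)
    refine ⟨k, ?_⟩
    have hk' : ((n : ℚ) - 1) * n = k + k := by exact_mod_cast (sub_add_cancel n 1 ▸ hk)
    simp only [eval_mul, eval_C, eval_X, eval_sub, eval_one]
    linarith⟩

theorem two_mul_choose2 : 2 * choose2 = X * (X - 1) :=
  Subtype.ext (by
    change (2 : ℚ[X]) * (C (1 / 2) * _) = _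
    rw [← mul_assoc, ← C_ofNat, ← C_mul, mul_one_div_cancel two_ne_zero, C_1, one_mul]; rfl)

theorem not_prime_two : ¬ Prime (2 : IntValued) := by
  intro hp
  rcases hp.dvd_or_dvd ⟨choose2, two_mul_choose2.symm⟩ with hX | hX
  · have h := map_dvd (evalInt 1) hX
    rw [map_ofNat, evalInt_X] at h
    exact absurd h (by decide)
  · have h := map_dvd (evalInt 0) hX
    rw [map_ofNat, map_sub, evalInt_X, map_one] at h
    exact absurd h (by decide)

end IntValued

theorem intValued_not_UFD : ¬ UniqueFactorizationMonoid IntValued := fun _ =>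
  IntValued.not_prime_two <| UniqueFactorizationMonoid.irreducible_iff_prime.mp <| by
    exact_mod_cast IntValued.irreducible_intCast Int.prime_two.irreducible
end

section
/- The map (x,y,z,w) ↦ (y+(1+w)z, y, x+(1−w)²x), where x,y,z range over positive integers and w over non-negative integers, has image exactly the set of triples (a,b,c) of positive integers with a > b and (c ≡ 0 mod 2 or a ≡ b mod 2). -/
theorem positive_parameter_parametrization (a b c : ℤ) :
    (∃ x y z w : ℤ, 0 < x ∧ 0 < y ∧ 0 < z ∧ 0 ≤ w ∧
        a = y + (1 + w) * z ∧ b = y ∧ c = x + (1 - w) ^ 2 * x) ↔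
      (0 < a ∧ 0 < b ∧ 0 < c ∧ b < a ∧ (c % 2 = 0 ∨ a % 2 = b % 2)) := by
  constructor
  · rintro ⟨x, y, z, w, hx, hy, hz, hw, ha, hb, hc⟩
    subst ha hb hc
    have h1 : (0:ℤ) ≤ (1 - w)^2 := sq_nonneg _
    refine ⟨?_, hy, ?_, ?_, ?_⟩
    · nlinarith
    · nlinarith
    · nlinarith
    · rcases Int.even_or_odd w with ⟨k, hk⟩ | ⟨k, hk⟩
      · left
        subst hk
        have h2 : x + (1 - (k + k))^2 * x = 2 * (x - 2*k*x + 2*k^2*x) := by ring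
        omega
      · right
        subst hk
        have h2 : b + (1 + (2*k + 1)) * z = b + 2 * ((1 + k) * z) := by ring
        omega
  · rintro ⟨ha, hb, hc, hab, hpar | hpar⟩
    · obtain ⟨m, hm⟩ : ∃ m, c = 2 * m := ⟨c / 2, by omega⟩
      exact ⟨m, b, a - b, 0, by omega, hb, by omega, le_refl 0, by ring, rfl, by omega⟩
    · obtain ⟨m, hm⟩ : ∃ m, a - b = 2 * m := ⟨(a - b) / 2, by omega⟩
      exact ⟨c, b, m, 1, hc, hb, by omega, by norm_num, by omega, rfl, by ring⟩
end

section
/- The image of the map F(x,y,z,w) = ((x+(1−w)²x)((y+(1+w)z)² − y²)/2, (x+(1−w)²x)(y+(1+w)z)y, (x+(1−w)²x)((y+(1+w)z)² + y²)/2), as x,y,z range over positive integers and w over non-negative integers, is exactly the set of positive Pythagorean triples. -/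
lemma pyth_aux (a b c : ℤ) (ha : 0 < a) (hb : 0 < b) (hc : 0 < c)
    (h : a ^ 2 + b ^ 2 = c ^ 2) :
    ∃ X M Y : ℤ, 0 < X ∧ 0 < Y ∧ Y < M ∧
      2 * a = X * (M ^ 2 - Y ^ 2) ∧ b = X * M * Y ∧ 2 * c = X * (M ^ 2 + Y ^ 2) := by
  have ht : PythagoreanTriple a b c := by
    unfold PythagoreanTriple; nlinarith [h]
  obtain ⟨k, m, n, hxy, hz⟩ := (PythagoreanTriple.classification).mp ht
  -- normalize z sign
  obtain ⟨k, m, n, hxy, hz⟩ :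
      ∃ k m n, (a = k * (m ^ 2 - n ^ 2) ∧ b = k * (2 * m * n) ∨
        a = k * (2 * m * n) ∧ b = k * (m ^ 2 - n ^ 2)) ∧ c = k * (m ^ 2 + n ^ 2) := by
    rcases hz with hz | hz
    · exact ⟨k, m, n, hxy, hz⟩
    · refine ⟨-k, n, -m, ?_, by linear_combination hz⟩
      rcases hxy with ⟨h1, h2⟩ | ⟨h1, h2⟩
      · exact Or.inl ⟨by linear_combination h1, by linear_combination h2⟩
      · exact Or.inr ⟨by linear_combination h1, by linear_combination h2⟩
  have hk : 0 < k := by nlinarith [sq_nonneg m, sq_nonneg n, sq_nonneg (m + n)]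
  rcases hxy with ⟨h1, h2⟩ | ⟨h1, h2⟩
  · -- a = k(m²-n²), b = 2kmn
    have hmn : 0 < m * n := by nlinarith
    refine ⟨2 * k, |m|, |n|, by linarith, ?_, ?_, ?_, ?_, ?_⟩
    · exact abs_pos.mpr (fun h0 => by rw [h0] at hmn; simp at hmn)
    · have : |n| ^ 2 < |m| ^ 2 := by
        rw [sq_abs, sq_abs]; nlinarith
      have hn0 : 0 ≤ |n| := abs_nonneg n
      nlinarith [abs_nonneg m]
    · rw [sq_abs, sq_abs]; linear_combination 2 * h1
    · have : |m| * |n| = m * n := by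
        rw [← abs_mul]; exact abs_of_pos hmn
      linear_combination h2 - 2 * k * this
    · rw [sq_abs, sq_abs]; linear_combination 2 * hz
  · -- a = 2kmn, b = k(m²-n²)
    have hmn : 0 < m * n := by nlinarith
    have habs : |m| * |n| = m * n := by rw [← abs_mul]; exact abs_of_pos hmn
    have hlt : |n| < |m| := by
      have : |n| ^ 2 < |m| ^ 2 := by rw [sq_abs, sq_abs]; nlinarith
      nlinarith [abs_nonneg m, abs_nonneg n]
    refine ⟨k, |m| + |n|, |m| - |n|, hk, by linarith, by
      have := abs_pos.mpr (show n ≠ 0 by rintro rfl; simp at hmn); linarith, ?_, ?_, ?_⟩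
    · linear_combination 2 * h1 - 4 * k * habs
    · have sm := sq_abs m; have sn := sq_abs n
      linear_combination h2 - k * sm + k * sn
    · have sm := sq_abs m; have sn := sq_abs n
      linear_combination 2 * hz - 2 * k * sm - 2 * k * sn

theorem positive_pythagorean_parametrization (a b c : ℤ) :
    (∃ x y z w : ℤ, 0 < x ∧ 0 < y ∧ 0 < z ∧ 0 ≤ w ∧
        (a : ℚ) = ((x + (1 - w) ^ 2 * x : ℤ) : ℚ) *
            (((y + (1 + w) * z : ℤ) : ℚ) ^ 2 - (y : ℚ) ^ 2) / 2 ∧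
        (b : ℚ) = ((x + (1 - w) ^ 2 * x : ℤ) : ℚ) * ((y + (1 + w) * z : ℤ) : ℚ) * (y : ℚ) ∧
        (c : ℚ) = ((x + (1 - w) ^ 2 * x : ℤ) : ℚ) *
            (((y + (1 + w) * z : ℤ) : ℚ) ^ 2 + (y : ℚ) ^ 2) / 2) ↔
      (0 < a ∧ 0 < b ∧ 0 < c ∧ a ^ 2 + b ^ 2 = c ^ 2) := by
  constructor
  · rintro ⟨x, y, z, w, hx, hy, hz, hw, ea, eb, ec⟩
    have hk : (0 : ℤ) < x + (1 - w) ^ 2 * x := by nlinarith [sq_nonneg (1 - w)]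
    have hm : y < y + (1 + w) * z := by nlinarith
    have hkq : (0 : ℚ) < ((x + (1 - w) ^ 2 * x : ℤ) : ℚ) := by exact_mod_cast hk
    have hyq : (0 : ℚ) < (y : ℚ) := by exact_mod_cast hy
    have hmq : (y : ℚ) < ((y + (1 + w) * z : ℤ) : ℚ) := by exact_mod_cast hm
    have hsq : (y : ℚ) ^ 2 < ((y + (1 + w) * z : ℤ) : ℚ) ^ 2 := by nlinarith
    have ha' : (0 : ℚ) < (a : ℚ) := by
      rw [ea]
      have := mul_pos hkq (sub_pos.mpr hsq)
      linarith
    have hb' : (0 : ℚ) < (b : ℚ) := by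
      rw [eb]
      exact mul_pos (mul_pos hkq (by linarith)) hyq
    have hc' : (0 : ℚ) < (c : ℚ) := by
      rw [ec]
      have h2 : (0 : ℚ) < ((y + (1 + w) * z : ℤ) : ℚ) ^ 2 + (y : ℚ) ^ 2 := by
        nlinarith [sq_nonneg (((y + (1 + w) * z : ℤ) : ℚ)), pow_pos hyq 2]
      have := mul_pos hkq h2
      linarith
    refine ⟨by exact_mod_cast ha', by exact_mod_cast hb', by exact_mod_cast hc', ?_⟩
    have hq : (a : ℚ) ^ 2 + (b : ℚ) ^ 2 = (c : ℚ) ^ 2 := by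
      rw [ea, eb, ec]; ring
    exact_mod_cast hq
  · rintro ⟨ha, hb, hc, h⟩
    obtain ⟨X, M, Y, hX, hY, hYM, e1, e2, e3⟩ := pyth_aux a b c ha hb hc h
    rcases Int.even_or_odd (M - Y) with he | ho
    · -- same parity: w = 1, x = X, z = (M - Y) / 2
      obtain ⟨t, ht⟩ := he
      have hM : M = Y + 2 * t := by omega
      subst hM
      have c1 : 2 * (a : ℚ) = (X : ℚ) * (((Y : ℚ) + 2 * (t : ℚ)) ^ 2 - (Y : ℚ) ^ 2) := by
        exact_mod_cast e1
      have c2 : (b : ℚ) = (X : ℚ) * ((Y : ℚ) + 2 * (t : ℚ)) * (Y : ℚ) := by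
        exact_mod_cast e2
      have c3 : 2 * (c : ℚ) = (X : ℚ) * (((Y : ℚ) + 2 * (t : ℚ)) ^ 2 + (Y : ℚ) ^ 2) := by
        exact_mod_cast e3
      refine ⟨X, Y, t, 1, hX, hY, by omega, by norm_num, ?_, ?_, ?_⟩
      · push_cast
        linear_combination c1 / 2
      · push_cast
        linear_combination c2
      · push_cast
        linear_combination c3 / 2
    · -- opposite parity: X even, w = 0, z = M - Y
      have hodd : Odd (M ^ 2 - Y ^ 2) := by
        have h1 : Odd ((M - Y) * (M + Y)) :=
          ho.mul (by rcases ho with ⟨j, hj⟩; exact ⟨j + Y, by omega⟩)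
        rcases h1 with ⟨j, hj⟩
        exact ⟨j, by linear_combination hj⟩
      have hevX : Even X := by
        have hev : Even (X * (M ^ 2 - Y ^ 2)) := ⟨a, by linarith⟩
        rcases Int.even_mul.mp hev with h' | h'
        · exact h'
        · exact absurd h' (Int.not_even_iff_odd.mpr hodd)
      obtain ⟨x0, hx0⟩ := hevX
      subst hx0
      have c1 : 2 * (a : ℚ) = ((x0 : ℚ) + x0) * ((M : ℚ) ^ 2 - (Y : ℚ) ^ 2) := by
        exact_mod_cast e1
      have c2 : (b : ℚ) = ((x0 : ℚ) + x0) * (M : ℚ) * (Y : ℚ) := by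
        exact_mod_cast e2
      have c3 : 2 * (c : ℚ) = ((x0 : ℚ) + x0) * ((M : ℚ) ^ 2 + (Y : ℚ) ^ 2) := by
        exact_mod_cast e3
      refine ⟨x0, Y, M - Y, 0, by omega, hY, by omega, le_refl 0, ?_, ?_, ?_⟩
      · push_cast
        linear_combination c1 / 2
      · push_cast
        linear_combination c2
      · push_cast
        linear_combination c3 / 2
end
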